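/- Let g(x) = ax² + bx + c with a ≠ 0, and suppose r ∈ ℝ \ {0, −1} is a root of P_δ (where δ = b² − 4ac − 2b − 7), and define p = −(r²+r+1)/(a·r·(r+1)), x = −b/(2a) + (r³+2r²+r+1)/(2a·r·(r+1)), y = x + p, z = y + r·p. Then x, y, z are pairwise distinct and g(x) = y, g(y) = z, g(z) = x. -/
import Mathlib


def Ppoly (α X : ℝ) : ℝ :=
  X ^ 6 + 2 * X ^ 5 - (α + 3) * X ^ 4 - 2 * (α + 3) * X ^ 3 + (2 - α) * X ^ 2 + 4 * X + 1

theorem stmt9 (a b c r : ℝ) (ha : a ≠ 0) (hr0 : r ≠ 0) (hr1 : r ≠ -1)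
    (hroot : Ppoly (b ^ 2 - 4 * a * c - 2 * b - 7) r = 0) :
    let p := -(r ^ 2 + r + 1) / (a * r * (r + 1))
    let x := -b / (2 * a) + (r ^ 3 + 2 * r ^ 2 + r + 1) / (2 * a * r * (r + 1))
    let y := x + p
    let z := y + r * p
    x ≠ y ∧ y ≠ z ∧ x ≠ z ∧
    a * x ^ 2 + b * x + c = y ∧
    a * y ^ 2 + b * y + c = z ∧
    a * z ^ 2 + b * z + c = x := by
  intro p x y z
  have hr1' : r + 1 ≠ 0 := by intro h; apply hr1; linarith
  have hs : r ^ 2 + r + 1 > 0 := by nlinarith [sq_nonneg (2 * r + 1)]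
  have hden : a * r * (r + 1) ≠ 0 := mul_ne_zero (mul_ne_zero ha hr0) hr1'
  have hu : r * (r + 1) ≠ 0 := mul_ne_zero hr0 hr1'
  have hden2 : 2 * a * (r * (r + 1)) ≠ 0 := by
    exact mul_ne_zero (mul_ne_zero two_ne_zero ha) hu
  have hp : p ≠ 0 := by
    show -(r ^ 2 + r + 1) / (a * r * (r + 1)) ≠ 0
    exact div_ne_zero (by linarith) hden
  have key : (b ^ 2 - 4 * a * c - 2 * b - 7) * (r * (r + 1)) ^ 2 =
      r ^ 6 + 2 * r ^ 5 - 3 * r ^ 4 - 6 * r ^ 3 + 2 * r ^ 2 + 4 * r + 1 := by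
    unfold Ppoly at hroot; linear_combination -hroot
  have hc : c = ((b ^ 2 - 2 * b - 7) * (r * (r + 1)) ^ 2 -
      (r ^ 6 + 2 * r ^ 5 - 3 * r ^ 4 - 6 * r ^ 3 + 2 * r ^ 2 + 4 * r + 1)) /
      (4 * a * (r * (r + 1)) ^ 2) := by
    rw [eq_div_iff (by simp [ha, hu, pow_ne_zero])]
    linear_combination -key
  have hx : x = (r ^ 3 + 2 * r ^ 2 + r + 1 - b * (r * (r + 1))) / (2 * a * (r * (r + 1))) := by
    simp only [x]; field_simp; ring
  have hy : y = (r ^ 3 - r - 1 - b * (r * (r + 1))) / (2 * a * (r * (r + 1))) := by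
    simp only [y, x, p]; field_simp; ring
  have hzz : z = (-(r ^ 3) - 2 * r ^ 2 - 3 * r - 1 - b * (r * (r + 1))) /
      (2 * a * (r * (r + 1))) := by
    simp only [z, y, x, p]; field_simp; ring
  have hz' : z = x + (p + r * p) := by simp only [z, y]; ring
  refine ⟨?_, ?_, ?_, ?_, ?_, ?_⟩
  · intro h; exact hp (left_eq_add.mp h)
  · intro h; exact mul_ne_zero hr0 hp (left_eq_add.mp h)
  · intro h
    rw [hz'] at h
    have h2 : (1 + r) * p = 0 := by linear_combination left_eq_add.mp h
    rcases mul_eq_zero.mp h2 with h' | h'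
    · exact hr1' (by linarith)
    · exact hp h'
  · rw [hx, hy, hc]; field_simp; ring
  · rw [hy, hzz, hc]; field_simp; ring
  · rw [hzz, hx, hc]; field_simp; ring
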